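/- (Corollary 1, decay; case f = 0.) Set h̃_τ := [‖u(0)‖ + ∫_0^τ α(ξ)·ν(ξ)·‖u(ξ−τ)‖^p dξ]/ν(τ) and assume h̃_τ > 0. Assume the improper integral I := ∫_τ^∞ α(ξ)·σ(ξ)^p·ν(ξ)^{1−p} dξ converges, (h̃_τ·ν(τ))^{1−p} > (p−1)·I, and lim_{t→∞} ∫_0^t γ(ξ) dξ = −∞. Then lim_{t→∞} ‖u(t)‖ = 0. -/

import Mathlib

/-!
Where `‖u‖ > 0` its right derivative is at most `γ ‖u‖ + α ‖u(· - τ)‖ ^ p`, the right-hand side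
of the delay equation solved by `h`, so a fence argument on the successive intervals
`[kτ, (k + 1)τ]` gives `‖u‖ ≤ h`. With the integrating factor `ν`, `w = h ν` is nondecreasing,
`w(τ) = h̃_τ ν(τ)` by the fundamental theorem of calculus on `[0, τ]`, and
`w' = α ν h(· - τ) ^ p ≤ α σ ^ p ν ^ (1 - p) w ^ p`; hence (Bihari)
`w ^ (1 - p) + (p - 1) ∫_τ^t α σ ^ p ν ^ (1 - p)` is nondecreasing. The hypothesis
`(p - 1) I < w(τ) ^ (1 - p)` thus bounds `w` by a constant `M`, and
`‖u(t)‖ ≤ M / ν(t) = M exp (∫_0^t γ) → 0`.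
-/

open Real MeasureTheory Set Filter ComplexInnerProductSpace

/-- `ν(t) = exp(−∫₀ᵗ γ(ξ) dξ)`. -/
noncomputable def nu (γ : ℝ → ℝ) (t : ℝ) : ℝ := Real.exp (-∫ ξ in (0:ℝ)..t, γ ξ)

/-- `σ(t) = exp(−∫_{t−τ}^t γ(ξ) dξ)`. -/
noncomputable def sig (γ : ℝ → ℝ) (τ t : ℝ) : ℝ :=
  Real.exp (-∫ ξ in (t - τ)..t, γ ξ)

section NormDeriv

variable {𝕜 E : Type*} [RCLike 𝕜] [NormedAddCommGroup E] [InnerProductSpace 𝕜 E]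
  [NormedSpace ℝ E]

theorem norm_mul_eq_re_inner_of_hasDerivWithinAt {u : ℝ → E} {u' : E} {n : ℝ} {s : Set ℝ}
    {t : ℝ} (hu : HasDerivWithinAt u u' s t) (hn : HasDerivWithinAt (‖u ·‖) n s t)
    (hs : UniqueDiffWithinAt ℝ s t) : ‖u t‖ * n = RCLike.re (inner 𝕜 (u t) u') := by
  have hinner := (RCLike.reCLM (K := 𝕜)).hasFDerivAt.comp_hasDerivWithinAt t (hu.inner 𝕜 hu)
  simp only [Function.comp_def, RCLike.reCLM_apply, inner_self_eq_norm_mul_norm, map_add,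
    inner_re_symm (𝕜 := 𝕜) u'] at hinner
  linarith [hs.eq_deriv _ (hn.mul hn) hinner]

theorem le_of_re_inner_le_norm_mul {u : ℝ → E} {u' : E} {n c : ℝ} {s : Set ℝ} {t : ℝ}
    (hu : HasDerivWithinAt u u' s t) (hn : HasDerivWithinAt (‖u ·‖) n s t)
    (hs : UniqueDiffWithinAt ℝ s t) (hut : u t ≠ 0)
    (hle : RCLike.re (inner 𝕜 (u t) u') ≤ ‖u t‖ * c) : n ≤ c := by
  rw [← norm_mul_eq_re_inner_of_hasDerivWithinAt hu hn hs] at hle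
  exact le_of_mul_le_mul_left hle (norm_pos_iff.2 hut)

end NormDeriv

section IntegratingFactor

theorem nu_pos (γ : ℝ → ℝ) (t : ℝ) : 0 < nu γ t := exp_pos _

theorem nu_zero (γ : ℝ → ℝ) : nu γ 0 = 1 := by simp [nu]

variable {γ : ℝ → ℝ}

theorem hasDerivAt_nu (hγ : Continuous γ) (t : ℝ) : HasDerivAt (nu γ) (-γ t * nu γ t) t := by
  have := ((hγ.integral_hasStrictDerivAt 0 t).hasDerivAt.neg).exp
  rwa [mul_comm] at this

theorem continuous_nu (hγ : Continuous γ) : Continuous (nu γ) :=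
  continuous_iff_continuousAt.2 fun t => (hasDerivAt_nu hγ t).continuousAt

theorem sig_eq_nu_div (hγ : Continuous γ) (τ t : ℝ) : sig γ τ t = nu γ t / nu γ (t - τ) := by
  rw [sig, nu, nu, ← exp_sub, ← intervalIntegral.integral_add_adjacent_intervals
    (hγ.intervalIntegrable 0 (t - τ)) (hγ.intervalIntegrable (t - τ) t)]
  ring_nf

theorem continuous_sig (hγ : Continuous γ) (τ : ℝ) : Continuous (sig γ τ) := by
  simp_rw [funext (sig_eq_nu_div hγ τ)]
  exact (continuous_nu hγ).div ((continuous_nu hγ).comp (continuous_sub_right τ))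
    fun t => (nu_pos γ _).ne'

theorem tendsto_inv_nu_atTop (hγ : Tendsto (fun t => ∫ ξ in (0:ℝ)..t, γ ξ) atTop atBot) :
    Tendsto (fun t => (nu γ t)⁻¹) atTop (nhds 0) := by
  have hinv : (fun t => (nu γ t)⁻¹) = fun t => exp (∫ ξ in (0:ℝ)..t, γ ξ) :=
    funext fun t => by rw [nu, exp_neg, inv_inv]
  rw [hinv]
  exact tendsto_exp_atBot.comp hγ

theorem HasDerivWithinAt.mul_nu (hγ : Continuous γ) {h : ℝ → ℝ} {r t : ℝ} {s : Set ℝ}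
    (hh : HasDerivWithinAt h (γ t * h t + r) s t) :
    HasDerivWithinAt (fun x => h x * nu γ x) (r * nu γ t) s t :=
  (hh.mul (hasDerivAt_nu hγ t).hasDerivWithinAt).congr_deriv (by ring)

end IntegratingFactor

section Comparison

theorem le_of_deriv_right_le_linear {γ r g g' h h' : ℝ → ℝ} {a b : ℝ}
    (hγ : ContinuousOn γ (Icc a b))
    (hgc : ContinuousOn g (Icc a b)) (hgd : ∀ x ∈ Ico a b, HasDerivWithinAt g (g' x) (Ici x) x)
    (hhc : ContinuousOn h (Icc a b)) (hhd : ∀ x ∈ Ico a b, HasDerivWithinAt h (h' x) (Ici x) x)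
    (hsub : ∀ x ∈ Ico a b, h x < g x → g' x ≤ γ x * g x + r x)
    (hsuper : ∀ x ∈ Ico a b, γ x * h x + r x ≤ h' x)
    (ha : g a ≤ h a) : ∀ x ∈ Icc a b, g x ≤ h x := by
  obtain ⟨K, hK⟩ := isCompact_Icc.bddAbove_image hγ
  set L := K + 1
  have hγL : ∀ x ∈ Icc a b, γ x < L := fun x hx =>
    (hK (mem_image_of_mem γ hx)).trans_lt (lt_add_one K)
  -- fence `h + ε e^{L (x - a)}`: where `g` touches it, `g` grows strictly slower since `γ < L`
  have hfence : ∀ ε > 0, ∀ x ∈ Icc a b, g x ≤ h x + ε * exp (L * (x - a)) := by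
    intro ε hε
    have hE : ∀ x, HasDerivAt (fun y => ε * exp (L * (y - a))) (ε * (exp (L * (x - a)) * L)) x :=
      fun x => ((((hasDerivAt_id' x).sub_const a).const_mul L).exp.const_mul ε).congr_deriv
        (by ring)
    have ha' : g a ≤ h a + ε * exp (L * (a - a)) := by simpa using ha.trans (by linarith)
    refine image_le_of_deriv_right_lt_deriv_boundary' hgc hgd ha'
      (hhc.add (continuous_const.mul (continuous_exp.comp
        (continuous_const.mul (continuous_sub_right a)))).continuousOn)
      (fun x hx => (hhd x hx).add (hE x).hasDerivWithinAt) fun x hx hgx => ?_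
    have hεE : 0 < ε * exp (L * (x - a)) := by positivity
    have hγx := hγL x (Ico_subset_Icc_self hx)
    calc g' x ≤ γ x * g x + r x := hsub x hx (by linarith)
      _ = γ x * h x + r x + γ x * (ε * exp (L * (x - a))) := by rw [hgx]; ring
      _ < h' x + ε * (exp (L * (x - a)) * L) := by nlinarith [hsuper x hx]
  intro x hx
  refine le_of_forall_pos_le_add fun δ hδ => ?_
  have hE := exp_pos (L * (x - a))
  simpa [div_mul_cancel₀ _ hE.ne'] using hfence (δ / exp (L * (x - a))) (by positivity) x hx

theorem forall_of_forall_Icc_step {τ : ℝ} (hτ : 0 < τ) {P : ℝ → Prop}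
    (h0 : ∀ t ∈ Icc (-τ) 0, P t)
    (hstep : ∀ a, 0 ≤ a → (∀ t ∈ Icc (-τ) a, P t) → ∀ t ∈ Icc a (a + τ), P t) :
    ∀ t, -τ ≤ t → P t := by
  have hn : ∀ n : ℕ, ∀ t ∈ Icc (-τ) (n * τ), P t := by
    intro n
    induction n with
    | zero => simpa using h0
    | succ n ih =>
      intro t ht
      rcases le_or_gt t (n * τ) with htn | htn
      · exact ih t ⟨ht.1, htn⟩
      · exact hstep (n * τ) (by positivity) ih t ⟨htn.le, by push_cast at ht; linarith [ht.2]⟩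
  intro t ht
  obtain ⟨n, hn'⟩ := exists_nat_ge (t / τ)
  exact hn n t ⟨ht, (div_le_iff₀ hτ).1 hn'⟩

theorem le_of_delay_comparison {τ : ℝ} (hτ : 0 < τ) {γ α φ g g' h h' : ℝ → ℝ}
    (hγ : Continuous γ) (hα : ∀ t, 0 ≤ α t) (hφ : MonotoneOn φ (Ici 0)) (hg0 : ∀ t, 0 ≤ g t)
    (hgc : ContinuousOn g (Ici (-τ)))
    (hgd : ∀ t, 0 ≤ t → HasDerivWithinAt g (g' t) (Ici 0) t)
    (hhc : ContinuousOn h (Ici (-τ)))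
    (hhd : ∀ t, 0 ≤ t → HasDerivWithinAt h (h' t) (Ici 0) t)
    (hsub : ∀ t, 0 ≤ t → h t < g t → g' t ≤ γ t * g t + α t * φ (g (t - τ)))
    (hsuper : ∀ t, 0 ≤ t → γ t * h t + α t * φ (h (t - τ)) ≤ h' t)
    (hinit : ∀ t ∈ Icc (-τ) 0, g t ≤ h t) :
    ∀ t, -τ ≤ t → g t ≤ h t := by
  refine forall_of_forall_Icc_step hτ hinit fun a ha hle => ?_
  have hIcc : Icc a (a + τ) ⊆ Ici (-τ) := fun x hx => mem_Ici.2 (by linarith [hx.1])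
  have hright : ∀ x ∈ Ico a (a + τ), Ici x ⊆ Ici 0 := fun x hx => Ici_subset_Ici.2 (ha.trans hx.1)
  refine le_of_deriv_right_le_linear (r := fun x => α x * φ (h (x - τ))) hγ.continuousOn
    (hgc.mono hIcc) (fun x hx => (hgd x (ha.trans hx.1)).mono (hright x hx))
    (hhc.mono hIcc) (fun x hx => (hhd x (ha.trans hx.1)).mono (hright x hx))
    (fun x hx hx' => ?_) (fun x hx => hsuper x (ha.trans hx.1)) (hle a ⟨by linarith, le_rfl⟩)
  have hpast : g (x - τ) ≤ h (x - τ) := hle _ ⟨by linarith [hx.1], by linarith [hx.2]⟩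
  have hφx := hφ (hg0 _) ((hg0 _).trans hpast) hpast
  have := mul_le_mul_of_nonneg_left hφx (hα x)
  linarith [hsub x (ha.trans hx.1) hx']

end Comparison

section Bihari

theorem monotoneOn_Ici_of_hasDerivWithinAt_nonneg {f f' : ℝ → ℝ} {a : ℝ}
    (hf : ∀ x, a ≤ x → HasDerivWithinAt f (f' x) (Ici a) x) (hf' : ∀ x, a < x → 0 ≤ f' x) :
    MonotoneOn f (Ici a) := by
  refine monotoneOn_of_hasDerivWithinAt_nonneg (f' := f') (convex_Ici a)
    (fun x hx => (hf x hx).continuousWithinAt) (fun x hx => ?_) (fun x hx => ?_)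
  · rw [interior_Ici] at hx ⊢
    exact (hf x hx.le).mono Ioi_subset_Ici_self
  · rw [interior_Ici] at hx
    exact hf' x hx

theorem rpow_one_sub_sub_integral_le {w w' F : ℝ → ℝ} {a p : ℝ} (hp : 1 ≤ p)
    (hF : Continuous F) (hw : ∀ t, a ≤ t → 0 < w t)
    (hwd : ∀ t, a ≤ t → HasDerivWithinAt w (w' t) (Ici a) t)
    (hw' : ∀ t, a ≤ t → w' t ≤ F t * w t ^ p) {t : ℝ} (ht : a ≤ t) :
    w a ^ (1 - p) - (p - 1) * ∫ ξ in a..t, F ξ ≤ w t ^ (1 - p) := by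
  have hmono : MonotoneOn (fun t => w t ^ (1 - p) + (p - 1) * ∫ ξ in a..t, F ξ) (Ici a) := by
    refine monotoneOn_Ici_of_hasDerivWithinAt_nonneg (fun x hx =>
      ((hwd x hx).rpow_const (Or.inl (hw x hx).ne')).add
        ((hF.integral_hasStrictDerivAt a x).hasDerivAt.hasDerivWithinAt.const_mul (p - 1)))
      fun x hx => ?_
    have hwx := hw x hx.le
    have hdiv : (w x ^ p)⁻¹ * w' x ≤ F x :=
      (inv_mul_le_iff₀ (rpow_pos_of_pos hwx p)).2 ((hw' x hx.le).trans_eq (mul_comm _ _))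
    calc (0 : ℝ) ≤ (p - 1) * (F x - (w x ^ p)⁻¹ * w' x) := mul_nonneg (by linarith) (by linarith)
      _ = w' x * (1 - p) * w x ^ (1 - p - 1) + (p - 1) * F x := by
        rw [show 1 - p - 1 = -p by ring, rpow_neg hwx.le]; ring
  have := hmono self_mem_Ici ht ht
  simp only [intervalIntegral.integral_same, mul_zero, add_zero] at this
  linarith

end Bihari

section DelayEquation

variable {τ p : ℝ} {γ α h h' : ℝ → ℝ}

theorem hasDerivWithinAt_mul_nu_of_delay (hγ : Continuous γ)
    (hhd : ∀ t, 0 ≤ t → HasDerivWithinAt h (h' t) (Ici 0) t)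
    (heq : ∀ t, 0 ≤ t → h' t = γ t * h t + α t * h (t - τ) ^ p) (t : ℝ) (ht : 0 ≤ t) :
    HasDerivWithinAt (fun s => h s * nu γ s) (α t * nu γ t * h (t - τ) ^ p) (Ici 0) t :=
  ((heq t ht ▸ hhd t ht).mul_nu hγ).congr_deriv (by ring)

theorem mul_nu_eq_add_integral {g : ℝ → ℝ} (hτ : 0 ≤ τ) (hp : 0 ≤ p) (hγ : Continuous γ)
    (hα : Continuous α) (hhc : ContinuousOn h (Ici (-τ)))
    (hw : ∀ t, 0 ≤ t →
      HasDerivWithinAt (fun s => h s * nu γ s) (α t * nu γ t * h (t - τ) ^ p) (Ici 0) t)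
    (hinit : ∀ t, -τ ≤ t → t ≤ 0 → h t = g t) :
    h τ * nu γ τ = g 0 + ∫ ξ in (0:ℝ)..τ, α ξ * nu γ ξ * g (ξ - τ) ^ p := by
  have hpast : ContinuousOn (fun ξ => h (ξ - τ)) (Icc 0 τ) :=
    hhc.comp (continuousOn_id.sub continuousOn_const) fun ξ hξ =>
      show -τ ≤ ξ - τ by linarith [hξ.1]
  have hint : IntervalIntegrable (fun ξ => α ξ * nu γ ξ * h (ξ - τ) ^ p) volume 0 τ :=
    ((hα.mul (continuous_nu hγ)).continuousOn.mul
      (hpast.rpow_const fun _ _ => Or.inr hp)).intervalIntegrable_of_Icc hτ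
  have hhist : ∫ ξ in (0:ℝ)..τ, α ξ * nu γ ξ * h (ξ - τ) ^ p =
      ∫ ξ in (0:ℝ)..τ, α ξ * nu γ ξ * g (ξ - τ) ^ p := by
    refine intervalIntegral.integral_congr fun ξ hξ => ?_
    rw [uIcc_of_le hτ] at hξ
    simp only [hinit (ξ - τ) (by linarith [hξ.1]) (by linarith [hξ.2])]
  rw [← hhist, ← hinit 0 (by linarith) le_rfl,
    intervalIntegral.integral_eq_sub_of_hasDeriv_right_of_le hτ
    (fun x hx => (hw x hx.1).continuousWithinAt.mono (Icc_subset_Ici_self))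
    (fun x hx => (hw x hx.1.le).mono fun y hy => hx.1.le.trans (le_of_lt hy)) hint, nu_zero]
  ring

theorem mul_rpow_delay_le_of_monotoneOn (hτ : 0 ≤ τ) (hp : 0 ≤ p) (hγ : Continuous γ)
    (hα : ∀ t, 0 ≤ α t)
    (hh0 : ∀ t, -τ ≤ t → 0 ≤ h t) (hmono : MonotoneOn (fun t => h t * nu γ t) (Ici 0))
    {t : ℝ} (ht : τ ≤ t) :
    α t * nu γ t * h (t - τ) ^ p ≤
      α t * sig γ τ t ^ p * nu γ t ^ (1 - p) * (h t * nu γ t) ^ p := by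
  have hν := nu_pos γ t
  have hνpast := nu_pos γ (t - τ)
  have hσ : 0 < sig γ τ t := exp_pos _
  have hpast : h (t - τ) ≤ h t * nu γ t * sig γ τ t / nu γ t := by
    have hνshift : nu γ t = nu γ (t - τ) * sig γ τ t := by
      rw [sig_eq_nu_div hγ]; field_simp
    rw [le_div_iff₀ hν]
    calc h (t - τ) * nu γ t = h (t - τ) * nu γ (t - τ) * sig γ τ t := by rw [hνshift]; ring
      _ ≤ h t * nu γ t * sig γ τ t := mul_le_mul_of_nonneg_right
        (hmono (mem_Ici.2 (by linarith)) (mem_Ici.2 (by linarith)) (by linarith)) hσ.le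
  have hw : 0 ≤ h t * nu γ t := mul_nonneg (hh0 t (by linarith)) hν.le
  calc α t * nu γ t * h (t - τ) ^ p
      ≤ α t * nu γ t * (h t * nu γ t * sig γ τ t / nu γ t) ^ p := by
        gcongr
        · exact mul_nonneg (hα t) hν.le
        · exact hh0 _ (by linarith)
    _ = α t * sig γ τ t ^ p * nu γ t ^ (1 - p) * (h t * nu γ t) ^ p := by
        rw [div_rpow (by positivity) hν.le, mul_rpow hw hσ.le, rpow_sub hν, rpow_one]
        field_simp

theorem mul_nu_le_of_integral_lt (hτ : 0 < τ) (hp : 1 < p) (hγ : Continuous γ)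
    (hα : Continuous α) (hα0 : ∀ t, 0 ≤ α t) (hh0 : ∀ t, -τ ≤ t → 0 ≤ h t)
    (hw : ∀ t, 0 ≤ t →
      HasDerivWithinAt (fun s => h s * nu γ s) (α t * nu γ t * h (t - τ) ^ p) (Ici 0) t)
    (hpos : 0 < h τ * nu γ τ)
    (hint : IntegrableOn (fun ξ => α ξ * sig γ τ ξ ^ p * nu γ ξ ^ (1 - p)) (Ici τ))
    (hcond : (p - 1) * ∫ ξ in Ici τ, α ξ * sig γ τ ξ ^ p * nu γ ξ ^ (1 - p) <
      (h τ * nu γ τ) ^ (1 - p)) {t : ℝ} (ht : τ ≤ t) :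
    h t * nu γ t ≤ ((h τ * nu γ τ) ^ (1 - p) -
      (p - 1) * ∫ ξ in Ici τ, α ξ * sig γ τ ξ ^ p * nu γ ξ ^ (1 - p)) ^ (1 - p)⁻¹ := by
  set F := fun ξ => α ξ * sig γ τ ξ ^ p * nu γ ξ ^ (1 - p)
  have hF0 : ∀ ξ, 0 ≤ F ξ := fun ξ =>
    mul_nonneg (mul_nonneg (hα0 ξ) (rpow_nonneg (exp_pos _).le _)) (rpow_nonneg (nu_pos γ ξ).le _)
  have hFc : Continuous F :=
    (hα.mul ((continuous_sig hγ τ).rpow_const fun _ => Or.inl (exp_pos _).ne')).mul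
      ((continuous_nu hγ).rpow_const fun _ => Or.inl (nu_pos γ _).ne')
  have hmono : MonotoneOn (fun t => h t * nu γ t) (Ici 0) :=
    monotoneOn_Ici_of_hasDerivWithinAt_nonneg hw fun x hx =>
      mul_nonneg (mul_nonneg (hα0 x) (nu_pos γ x).le) (rpow_nonneg (hh0 _ (by linarith)) p)
  have hwpos : ∀ t, τ ≤ t → 0 < h t * nu γ t := fun t ht =>
    hpos.trans_le (hmono (mem_Ici.2 hτ.le) (mem_Ici.2 (hτ.le.trans ht)) ht)
  have hbihari := rpow_one_sub_sub_integral_le hp.le hFc hwpos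
    (fun t ht => (hw t (hτ.le.trans ht)).mono (Ici_subset_Ici.2 hτ.le))
    (fun t ht => mul_rpow_delay_le_of_monotoneOn hτ.le (by linarith) hγ hα0 hh0 hmono ht) ht
  have htail : ∫ ξ in τ..t, F ξ ≤ ∫ ξ in Ici τ, F ξ := by
    rw [intervalIntegral.integral_of_le ht]
    exact setIntegral_mono_set hint (Eventually.of_forall hF0)
      (Eventually.of_forall fun _ hξ => le_of_lt hξ.1)
  have := mul_le_mul_of_nonneg_left htail (by linarith : 0 ≤ p - 1)
  rw [le_rpow_inv_iff_of_neg (hwpos t ht) (by linarith) (by linarith)]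
  linarith

end DelayEquation

/-- Corollary 2.8 (Corollary 1), decay for the case `f = 0`: if moreover `∫₀ᵗ γ → −∞` as `t → ∞`, then `‖u(t)‖ → 0`. -/
theorem stmt_17
    {H : Type*} [NormedAddCommGroup H] [InnerProductSpace ℂ H]
    (τ p : ℝ) (hτ : 0 < τ) (hp : 1 < p)
    (γ α : ℝ → ℝ)
    (hγc : Continuous γ) (hαc : Continuous α)
    (hα : ∀ t, 0 ≤ α t)
    (u : ℝ → H) (u' : ℝ → H)
    (huc : ContinuousOn u (Ici (-τ)))
    (hud : ∀ t, 0 ≤ t → HasDerivWithinAt u (u' t) (Ici (0:ℝ)) t)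
    (hnd : ∀ t, 0 ≤ t → DifferentiableWithinAt ℝ (fun s => ‖u s‖) (Ici (0:ℝ)) t)
    (huineq : ∀ t, 0 ≤ t → (⟪u t, u' t⟫).re ≤
      γ t * ‖u t‖ ^ 2 + α t * ‖u t‖ * ‖u (t - τ)‖ ^ p)
    (h h' : ℝ → ℝ)
    (hh0 : ∀ t, -τ ≤ t → 0 ≤ h t)
    (hhc : ContinuousOn h (Ici (-τ)))
    (hhd : ∀ t, 0 ≤ t → HasDerivWithinAt h (h' t) (Ici (0:ℝ)) t)
    (hheq : ∀ t, 0 ≤ t → h' t = γ t * h t + α t * h (t - τ) ^ p)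
    (hinit : ∀ t, -τ ≤ t → t ≤ 0 → h t = ‖u t‖)
    (hτv : ℝ)
    (hτvdef : hτv = (‖u 0‖ + ∫ ξ in (0:ℝ)..τ,
        α ξ * nu γ ξ * ‖u (ξ - τ)‖ ^ p) / nu γ τ)
    (hτvpos : 0 < hτv)
    (I : ℝ)
    (hint : IntegrableOn (fun ξ => α ξ * sig γ τ ξ ^ p * nu γ ξ ^ (1 - p)) (Ici τ))
    (hI : I = ∫ ξ in Ici τ, α ξ * sig γ τ ξ ^ p * nu γ ξ ^ (1 - p))
    (hcond : (p - 1) * I < (hτv * nu γ τ) ^ (1 - p))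
    (hγlim : Tendsto (fun t => ∫ ξ in (0:ℝ)..t, γ ξ) atTop atBot) :
    Tendsto (fun t => ‖u t‖) atTop (nhds 0) := by
  have hp0 : 0 ≤ p := by linarith
  have hsub : ∀ t, 0 ≤ t → h t < ‖u t‖ →
      derivWithin (‖u ·‖) (Ici 0) t ≤ γ t * ‖u t‖ + α t * ‖u (t - τ)‖ ^ p := fun t ht hlt =>
    le_of_re_inner_le_norm_mul (𝕜 := ℂ) (hud t ht) (hnd t ht).hasDerivWithinAt
      (uniqueDiffOn_Ici 0 t ht) (norm_pos_iff.1 ((hh0 t (by linarith)).trans_lt hlt))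
      ((huineq t ht).trans_eq (by ring))
  have hcomp : ∀ t, -τ ≤ t → ‖u t‖ ≤ h t :=
    le_of_delay_comparison hτ hγc hα (monotoneOn_rpow_Ici_of_exponent_nonneg hp0)
      (fun t => norm_nonneg (u t)) huc.norm (fun t ht => (hnd t ht).hasDerivWithinAt) hhc hhd
      hsub (fun t ht => (hheq t ht).ge) fun t ht => (hinit t ht.1 ht.2).ge
  have hw := hasDerivWithinAt_mul_nu_of_delay hγc hhd hheq
  have hwτ : h τ * nu γ τ = hτv * nu γ τ := by
    rw [hτvdef, div_mul_cancel₀ _ (nu_pos γ τ).ne',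
      mul_nu_eq_add_integral hτ.le hp0 hγc hαc hhc hw hinit]
  rw [← hwτ, hI] at hcond
  obtain ⟨M, hM⟩ : ∃ M, ∀ t, τ ≤ t → h t * nu γ t ≤ M := ⟨_, fun t => mul_nu_le_of_integral_lt
    hτ hp hγc hαc hα hh0 hw (hwτ ▸ mul_pos hτvpos (nu_pos γ τ)) hint hcond⟩
  refine squeeze_zero' (Eventually.of_forall fun t => norm_nonneg (u t))
    ((eventually_ge_atTop τ).mono fun t ht => ?_)
    (by simpa using (tendsto_inv_nu_atTop hγlim).const_mul M)
  calc ‖u t‖ ≤ h t * nu γ t * (nu γ t)⁻¹ := by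
        rw [mul_inv_cancel_right₀ (nu_pos γ t).ne']; exact hcomp t (by linarith)
    _ ≤ _ := mul_le_mul_of_nonneg_right (hM t ht) (inv_nonneg.2 (nu_pos γ t).le)
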